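/- arXiv:1511.02399 — 6 statements merged into one kernel-verified Lean document; each statement's English description precedes it below -/
import Mathlib

section
/- In the XOS two-buyer example with m > 2 items, the fractional allocation x where x_{1,{j}} = 1/m for each item j, x_{2,{j}} = 1/(m(m−1)) for each j, and x_{2,M} = (m−2)/(m−1), is feasible for the configuration LP and achieves welfare m/2 + 1/(2(m−1)) − δ, which strictly exceeds m/2 whenever 0 < δ < 1/(2(m−1)). -/
/-!
Both allocations are supported on the singletons and the grand bundle, so every sum of the
configuration LP against them collapses to `(∑ j, w {j}) * a + w univ * b`; what remains is
arithmetic in `m`.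
-/

open Finset

section SingletonGrandBundle

variable {α R : Type*} [Fintype α] [DecidableEq α]

def singletonGrandBundle [Zero R] [Add R] (a b : R) (S : Finset α) : R :=
  (if S.card = 1 then a else 0) + (if S = univ then b else 0)

theorem singletonGrandBundle_nonneg [AddZeroClass R] [Preorder R] [AddLeftMono R] {a b : R}
    (ha : 0 ≤ a) (hb : 0 ≤ b) (S : Finset α) : 0 ≤ singletonGrandBundle a b S :=
  add_nonneg (ite_nonneg ha le_rfl) (ite_nonneg hb le_rfl)

theorem singletonGrandBundle_eq_ite [AddZeroClass R] (h : 1 < Fintype.card α) (a b : R)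
    (S : Finset α) :
    singletonGrandBundle a b S = if S.card = 1 then a else if S = univ then b else 0 := by
  unfold singletonGrandBundle
  split_ifs with h1 h2
  · rw [h2, card_univ] at h1
    omega
  all_goals simp

theorem sum_mul_singletonGrandBundle [Semiring R] (w : Finset α → R) (a b : R) :
    ∑ S, w S * singletonGrandBundle a b S = (∑ j, w {j}) * a + w univ * b := by
  have hsingletons : ∑ S, w S * (if S.card = 1 then a else 0) = ∑ j, w {j} * a := by
    simp_rw [mul_ite, mul_zero]
    rw [← sum_filter, ← powerset_univ, ← powersetCard_eq_filter, powersetCard_one, sum_map]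
    rfl
  simp_rw [singletonGrandBundle, mul_add, sum_add_distrib, hsingletons, sum_mul, mul_ite,
    mul_zero, sum_ite_eq', mem_univ, if_true]

theorem sum_singletonGrandBundle [Semiring R] (a b : R) :
    ∑ S : Finset α, singletonGrandBundle a b S = Fintype.card α * a + b := by
  simpa using sum_mul_singletonGrandBundle (fun _ : Finset α => (1 : R)) a b

theorem sum_filter_mem_singletonGrandBundle [Semiring R] (a b : R) (j : α) :
    ∑ S with j ∈ S, singletonGrandBundle a b S = a + b := by
  simpa [sum_filter] using
    sum_mul_singletonGrandBundle (fun S : Finset α => if j ∈ S then (1 : R) else 0) a b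

end SingletonGrandBundle

theorem stmt6_general (m : ℕ) (hm : 2 < m) (δ : ℝ)
    (hδ : δ < 1 / (2 * ((m : ℝ) - 1)))
    (v : Fin 2 → Finset (Fin m) → ℝ)
    (hv1 : ∀ S : Finset (Fin m), v 0 S = if S = ∅ then 0 else 1 / 2 - δ)
    (hv2 : ∀ S : Finset (Fin m), v 1 S = if S = ∅ then 0 else max 1 ((S.card : ℝ) / 2))
    (x : Fin 2 → Finset (Fin m) → ℝ)
    (hx1 : ∀ S : Finset (Fin m),
      x 0 S = if S.card = 1 then 1 / (m : ℝ) else 0)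
    (hx2 : ∀ S : Finset (Fin m),
      x 1 S = if S.card = 1 then 1 / ((m : ℝ) * ((m : ℝ) - 1))
        else if S = Finset.univ then ((m : ℝ) - 2) / ((m : ℝ) - 1) else 0) :
    (∀ i S, 0 ≤ x i S) ∧
    (∀ i : Fin 2, ∑ S ∈ Finset.univ.powerset, x i S ≤ 1) ∧
    (∀ j : Fin m, ∑ i : Fin 2, ∑ S ∈ Finset.univ.powerset.filter (fun S => j ∈ S),
        x i S ≤ 1) ∧
    (∑ i : Fin 2, ∑ S ∈ Finset.univ.powerset, v i S * x i S
        = (m : ℝ) / 2 + 1 / (2 * ((m : ℝ) - 1)) - δ) ∧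
    ((m : ℝ) / 2 < (m : ℝ) / 2 + 1 / (2 * ((m : ℝ) - 1)) - δ) := by
  have hmR : (2 : ℝ) < m := by exact_mod_cast hm
  have hm1 : (0 : ℝ) < m - 1 := by linarith
  have halloc0 : x 0 = singletonGrandBundle (1 / (m : ℝ)) 0 :=
    funext fun S => by simp [hx1, singletonGrandBundle]
  have halloc1 : x 1 = singletonGrandBundle (1 / ((m : ℝ) * (m - 1))) ((m - 2) / (m - 1)) :=
    funext fun S => by rw [hx2, ← singletonGrandBundle_eq_ite (by rw [Fintype.card_fin]; omega)]
  have hval0 : ∀ j, v 0 {j} = 1 / 2 - δ := fun j => by simp [hv1]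
  have hval1 : ∀ j, v 1 {j} = 1 := fun j => by norm_num [hv2]
  have hval1_univ : v 1 univ = m / 2 := by
    rw [hv2, if_neg (univ_nonempty_iff.2 ⟨⟨0, by omega⟩⟩).ne_empty, card_univ, Fintype.card_fin]
    exact max_eq_right (by linarith)
  simp only [powerset_univ, Fin.forall_fin_two, Fin.sum_univ_two, halloc0, halloc1,
    sum_singletonGrandBundle, sum_filter_mem_singletonGrandBundle, sum_mul_singletonGrandBundle,
    hval0, hval1, hval1_univ, sum_const, card_univ, nsmul_eq_mul, Fintype.card_fin]
  refine ⟨⟨singletonGrandBundle_nonneg (by positivity) le_rfl,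
      singletonGrandBundle_nonneg (by positivity) (div_nonneg (by linarith) hm1.le)⟩,
    ⟨by field_simp; norm_num, by field_simp; linarith⟩, fun j => by field_simp; linarith,
    by field_simp; ring, by linarith⟩

/-- in the two-buyer XOS example with `m > 2` items, the given
fractional allocation is feasible for the configuration LP and has welfare
`m/2 + 1/(2(m−1)) − δ > m/2` for `0 < δ < 1/(2(m−1))`. -/
theorem stmt6 (m : ℕ) (hm : 2 < m) (δ : ℝ) (hδ0 : 0 < δ)
    (hδ : δ < 1 / (2 * ((m : ℝ) - 1)))
    (v : Fin 2 → Finset (Fin m) → ℝ)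
    (hv1 : ∀ S : Finset (Fin m), v 0 S = if S = ∅ then 0 else 1 / 2 - δ)
    (hv2 : ∀ S : Finset (Fin m), v 1 S = if S = ∅ then 0 else max 1 ((S.card : ℝ) / 2))
    (x : Fin 2 → Finset (Fin m) → ℝ)
    (hx1 : ∀ S : Finset (Fin m),
      x 0 S = if S.card = 1 then 1 / (m : ℝ) else 0)
    (hx2 : ∀ S : Finset (Fin m),
      x 1 S = if S.card = 1 then 1 / ((m : ℝ) * ((m : ℝ) - 1))
        else if S = Finset.univ then ((m : ℝ) - 2) / ((m : ℝ) - 1) else 0) :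
    (∀ i S, 0 ≤ x i S) ∧
    (∀ i : Fin 2, ∑ S ∈ Finset.univ.powerset, x i S ≤ 1) ∧
    (∀ j : Fin m, ∑ i : Fin 2, ∑ S ∈ Finset.univ.powerset.filter (fun S => j ∈ S),
        x i S ≤ 1) ∧
    (∑ i : Fin 2, ∑ S ∈ Finset.univ.powerset, v i S * x i S
        = (m : ℝ) / 2 + 1 / (2 * ((m : ℝ) - 1)) - δ) ∧
    ((m : ℝ) / 2 < (m : ℝ) / 2 + 1 / (2 * ((m : ℝ) - 1)) - δ) :=
  stmt6_general m hm δ hδ v hv1 hv2 x hx1 hx2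
end

section
/- In the XOS two-buyer example, for m > 2 and 0 < δ < 1/(2(m−1)), the optimal integral welfare over all allocations of all m items is m/2, and the configuration LP optimum is strictly greater than m/2; hence the integrality gap of the configuration LP is strictly greater than 1. -/
/-!
Integrally, buyer 1 values any bundle at less than `1/2`, while for `m ≥ 3` buyer 2 values any
proper subset at most `(m-1)/2`, so giving everything to buyer 2 (welfare `m/2`) is optimal.
Fractionally, buyer 1 can take a uniformly random singleton while buyer 2 takes the whole set with
probability `(m-2)/(m-1)` and otherwise a uniformly random singleton, which he values at `1`
rather than at `1/2`. Every item is then covered exactly once and the welfare is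
`m/2 + 1/(2(m-1)) - δ`.
-/

open Finset

section Valuations

variable {α : Type*} [DecidableEq α]

def constValuation (c : ℝ) (S : Finset α) : ℝ := if S = ∅ then 0 else c

@[simp]
theorem constValuation_singleton (c : ℝ) (a : α) : constValuation c ({a} : Finset α) = c := by
  simp [constValuation]

noncomputable def halfCardValuation (S : Finset α) : ℝ :=
  if S = ∅ then 0 else max 1 ((#S : ℝ) / 2)

theorem halfCardValuation_le_max (S : Finset α) :
    halfCardValuation S ≤ max 1 ((#S : ℝ) / 2) := by
  unfold halfCardValuation
  split_ifs
  exacts [zero_le_one.trans (le_max_left _ _), le_rfl]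

@[simp]
theorem halfCardValuation_singleton (a : α) : halfCardValuation ({a} : Finset α) = 1 := by
  norm_num [halfCardValuation]

theorem halfCardValuation_univ [Fintype α] (h : 2 ≤ Fintype.card α) :
    halfCardValuation (univ : Finset α) = Fintype.card α / 2 := by
  have h' : (2 : ℝ) ≤ Fintype.card α := by exact_mod_cast h
  have hne : (univ : Finset α) ≠ ∅ := (card_pos.mp (by rw [card_univ]; omega)).ne_empty
  rw [halfCardValuation, if_neg hne, card_univ, max_eq_right (by linarith)]

theorem constValuation_add_halfCardValuation_le [Fintype α] (hα : 3 ≤ Fintype.card α)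
    {c : ℝ} (hc : c ≤ 1 / 2) {X₁ X₂ : Finset α} (hd : Disjoint X₁ X₂) (hu : X₁ ∪ X₂ = univ) :
    constValuation c X₁ + halfCardValuation X₂ ≤ Fintype.card α / 2 := by
  rcases X₁.eq_empty_or_nonempty with rfl | hX₁
  · rw [empty_union] at hu
    rw [hu, halfCardValuation_univ (by omega), constValuation, if_pos rfl, zero_add]
  · have hcard : #X₁ + #X₂ = Fintype.card α := by
      rw [← card_union_of_disjoint hd, hu, card_univ]
    have hX₂ : (#X₂ : ℝ) + 1 ≤ Fintype.card α := by
      have := hX₁.card_pos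
      exact_mod_cast (by omega : #X₂ + 1 ≤ Fintype.card α)
    have hα' : (3 : ℝ) ≤ Fintype.card α := by exact_mod_cast hα
    have hmax : max 1 ((#X₂ : ℝ) / 2) ≤ (Fintype.card α - 1) / 2 :=
      max_le (by linarith) (by linarith)
    rw [constValuation, if_neg hX₁.ne_empty]
    linarith [halfCardValuation_le_max X₂]

end Valuations

section Singletons

variable {α M : Type*} [Fintype α] [AddCommMonoid M]

theorem sum_ite_card_eq_one (g : Finset α → M) :
    ∑ S : Finset α, (if #S = 1 then g S else 0) = ∑ a, g {a} := by
  rw [← sum_filter, ← powerset_univ, ← powersetCard_eq_filter, powersetCard_one, sum_map]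
  rfl

theorem sum_filter_mem_ite_card_eq_one [DecidableEq α] (j : α) (g : Finset α → M) :
    ∑ S with j ∈ S, (if #S = 1 then g S else 0) = g {j} := by
  have key : ∀ S : Finset α, (j ∈ S ∧ #S = 1) ↔ S = {j} := fun S => by
    rw [card_eq_one]
    constructor
    · rintro ⟨hj, a, rfl⟩
      rw [mem_singleton.mp hj]
    · rintro rfl
      exact ⟨mem_singleton_self j, j, rfl⟩
  simp_rw [sum_filter, ← ite_and, key, sum_ite_eq', mem_univ, if_true]

end Singletons

section ConfigLP

variable {α : Type*} [Fintype α] [DecidableEq α]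

noncomputable def configLPSolution : Fin 2 → Finset α → ℝ :=
  ![fun S => if #S = 1 then 1 / (Fintype.card α : ℝ) else 0,
    fun S => (if S = univ then ((Fintype.card α : ℝ) - 2) / (Fintype.card α - 1) else 0) +
      (if #S = 1 then 1 / ((Fintype.card α : ℝ) * (Fintype.card α - 1)) else 0)]

theorem configLPSolution_nonneg (hα : 2 ≤ Fintype.card α) (i : Fin 2) (S : Finset α) :
    0 ≤ configLPSolution i S := by
  have h : (2 : ℝ) ≤ Fintype.card α := by exact_mod_cast hα
  have h1 : (0 : ℝ) ≤ Fintype.card α - 2 := by linarith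
  have h2 : (0 : ℝ) ≤ Fintype.card α - 1 := by linarith
  fin_cases i <;> simp only [configLPSolution] <;> dsimp <;> split_ifs <;> positivity

theorem sum_configLPSolution (hα : 2 ≤ Fintype.card α) (i : Fin 2) :
    ∑ S : Finset α, configLPSolution i S = 1 := by
  have h : (2 : ℝ) ≤ Fintype.card α := by exact_mod_cast hα
  have h0 : (Fintype.card α : ℝ) ≠ 0 := by positivity
  have h1 : (Fintype.card α : ℝ) - 1 ≠ 0 := by linarith
  fin_cases i <;> simp only [configLPSolution] <;> dsimp
  · rw [sum_ite_card_eq_one (fun _ => 1 / (Fintype.card α : ℝ))]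
    simp [h0]
  · rw [sum_add_distrib, sum_ite_eq', sum_ite_card_eq_one (fun _ => _)]
    simp only [mem_univ, if_true, sum_const, card_univ, nsmul_eq_mul]
    field_simp
    ring

theorem sum_configLPSolution_filter_mem (hα : 2 ≤ Fintype.card α) (j : α) :
    ∑ i, ∑ S with j ∈ S, configLPSolution i S = 1 := by
  have h : (2 : ℝ) ≤ Fintype.card α := by exact_mod_cast hα
  have h0 : (Fintype.card α : ℝ) ≠ 0 := by positivity
  have h1 : (Fintype.card α : ℝ) - 1 ≠ 0 := by linarith
  simp only [Fin.sum_univ_two, configLPSolution, Matrix.cons_val_zero, Matrix.cons_val_one,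
    Matrix.cons_val_fin_one, sum_add_distrib, sum_filter_mem_ite_card_eq_one j (fun _ => _)]
  rw [sum_ite_eq', if_pos (by simp)]
  field_simp
  ring

theorem configLPSolution_welfare (hα : 2 ≤ Fintype.card α) (c : ℝ) :
    ∑ S : Finset α, constValuation c S * configLPSolution 0 S +
        ∑ S : Finset α, halfCardValuation S * configLPSolution 1 S
      = c + ((Fintype.card α : ℝ) - 1) / 2 + 1 / (2 * (Fintype.card α - 1)) := by
  have h : (2 : ℝ) ≤ Fintype.card α := by exact_mod_cast hα
  have h0 : (Fintype.card α : ℝ) ≠ 0 := by positivity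
  have h1 : (Fintype.card α : ℝ) - 1 ≠ 0 := by linarith
  simp only [configLPSolution, Matrix.cons_val_zero, Matrix.cons_val_one, Matrix.cons_val_fin_one,
    mul_add, mul_ite, mul_zero, sum_add_distrib, sum_ite_eq', mem_univ, if_true,
    sum_ite_card_eq_one (fun S => _ * _), halfCardValuation_singleton, halfCardValuation_univ hα]
  simp only [constValuation_singleton, sum_const, card_univ, nsmul_eq_mul]
  field_simp
  ring

end ConfigLP

/-- in the two-buyer XOS example with `m > 2` and
`0 < δ < 1/(2(m−1))`, the optimal integral welfare over allocations of all
items is `m/2`, while the configuration LP admits a feasible solution with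
value strictly greater than `m/2`; hence the integrality gap exceeds `1`. -/
theorem stmt7 (m : ℕ) (hm : 2 < m) (δ : ℝ) (hδ0 : 0 < δ)
    (hδ : δ < 1 / (2 * ((m : ℝ) - 1)))
    (v : Fin 2 → Finset (Fin m) → ℝ)
    (hv1 : ∀ S : Finset (Fin m), v 0 S = if S = ∅ then 0 else 1 / 2 - δ)
    (hv2 : ∀ S : Finset (Fin m), v 1 S = if S = ∅ then 0 else max 1 ((S.card : ℝ) / 2)) :
    -- the optimal integral allocation of all m items has welfare exactly m/2:
    ((∀ X₁ X₂ : Finset (Fin m), Disjoint X₁ X₂ → X₁ ∪ X₂ = Finset.univ →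
        v 0 X₁ + v 1 X₂ ≤ (m : ℝ) / 2) ∧
      (∃ X₁ X₂ : Finset (Fin m), Disjoint X₁ X₂ ∧ X₁ ∪ X₂ = Finset.univ ∧
        v 0 X₁ + v 1 X₂ = (m : ℝ) / 2)) ∧
    -- the configuration LP optimum is strictly greater than m/2:
    (∃ x : Fin 2 → Finset (Fin m) → ℝ,
      (∀ i S, 0 ≤ x i S) ∧
      (∀ i : Fin 2, ∑ S ∈ Finset.univ.powerset, x i S ≤ 1) ∧
      (∀ j : Fin m, ∑ i : Fin 2, ∑ S ∈ Finset.univ.powerset.filter (fun S => j ∈ S),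
          x i S ≤ 1) ∧
      (m : ℝ) / 2 < ∑ i : Fin 2, ∑ S ∈ Finset.univ.powerset, v i S * x i S) := by
  obtain rfl : v = ![constValuation (1 / 2 - δ), halfCardValuation] :=
    funext (Fin.forall_fin_two.2 ⟨funext hv1, funext hv2⟩)
  have hcard : 3 ≤ Fintype.card (Fin m) := by rwa [Fintype.card_fin]
  simp only [Finset.powerset_univ]
  refine ⟨⟨fun X₁ X₂ hd hu => ?_, ∅, Finset.univ, Finset.disjoint_empty_left _,
    Finset.empty_union _, ?_⟩, configLPSolution, configLPSolution_nonneg (by omega),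
    fun i => (sum_configLPSolution (by omega) i).le,
    fun j => (sum_configLPSolution_filter_mem (by omega) j).le, ?_⟩
  · simpa using constValuation_add_halfCardValuation_le hcard (by linarith) hd hu
  · simpa [constValuation] using halfCardValuation_univ (α := Fin m) (by omega)
  · simp only [Fin.sum_univ_two, Matrix.cons_val_zero, Matrix.cons_val_one,
      Matrix.cons_val_fin_one]
    have := configLPSolution_welfare (α := Fin m) (by omega) (1 / 2 - δ)
    simp only [Fintype.card_fin] at this
    linarith
end

section
/- First welfare theorem for stable outcomes: if (X, p) is a stable outcome, then for every allocation (Y₁, ..., Y_n) of the sold items M' = ⋃_i X_i, it holds that ∑_i v_i(X_i) ≥ ∑_i v_i(Y_i). That is, the stable allocation maximizes welfare among all integral allocations of the items it sells. -/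
/-!
Summing each buyer's optimality of `X i` against `Y i`, the welfare gain of `Y` over `X` is at
most the revenue `Y` raises at prices `p` minus the revenue `X` raises. Since the `X i` partition
`M'`, `X` raises the full price of `M'`, while the disjoint `Y i ⊆ M'` raise at most that, prices
being nonnegative.
-/

open Finset Function

lemma sum_sum_le_sum_of_pairwiseDisjoint_subset {ι α : Type*} [DecidableEq α] {s : Finset ι}
    {p : α → ℝ} (hp : ∀ j, 0 ≤ p j) {Y : ι → Finset α}
    (hdisj : Pairwise (Disjoint on Y)) {M : Finset α} (hsub : ∀ i, Y i ⊆ M) :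
    ∑ i ∈ s, ∑ j ∈ Y i, p j ≤ ∑ j ∈ M, p j := by
  rw [← sum_biUnion (hdisj.set_pairwise _)]
  exact sum_le_sum_of_subset_of_nonneg (biUnion_subset.mpr fun i _ => hsub i)
    fun j _ _ => hp j

lemma sum_valuation_le_of_forall_utility_le {ι α : Type*} {s : Finset ι}
    {v : ι → Finset α → ℝ} {p : α → ℝ} {X Y : ι → Finset α}
    (hstable : ∀ i, v i (Y i) - ∑ j ∈ Y i, p j ≤ v i (X i) - ∑ j ∈ X i, p j) :
    ∑ i ∈ s, v i (Y i) ≤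
      ∑ i ∈ s, v i (X i) + (∑ i ∈ s, ∑ j ∈ Y i, p j - ∑ i ∈ s, ∑ j ∈ X i, p j) := by
  have h := sum_le_sum fun i (_ : i ∈ s) => hstable i
  simp only [sum_sub_distrib] at h
  linarith

theorem stmt9_general {ι α : Type*} [Fintype ι] [DecidableEq α]
    (v : ι → Finset α → ℝ)
    (p : α → ℝ) (hp : ∀ j, 0 ≤ p j)
    (X : ι → Finset α)
    (hdisj : ∀ i k, i ≠ k → Disjoint (X i) (X k))
    (hstable : ∀ i, ∀ S : Finset α,
      v i S - ∑ j ∈ S, p j ≤ v i (X i) - ∑ j ∈ X i, p j)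
    (M' : Finset α) (hM' : M' = Finset.univ.biUnion X)
    (Y : ι → Finset α)
    (hYdisj : ∀ i k, i ≠ k → Disjoint (Y i) (Y k))
    (hYsub : ∀ i, Y i ⊆ M') :
    ∑ i, v i (Y i) ≤ ∑ i, v i (X i) := by
  have hrevenueX : ∑ i, ∑ j ∈ X i, p j = ∑ j ∈ M', p j := by
    rw [hM', sum_biUnion fun i _ k _ hik => hdisj i k hik]
  have hrevenueY : ∑ i, ∑ j ∈ Y i, p j ≤ ∑ j ∈ M', p j :=
    sum_sum_le_sum_of_pairwiseDisjoint_subset hp (fun i k hik => hYdisj i k hik) hYsub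
  have hwelfare := sum_valuation_le_of_forall_utility_le (s := univ) fun i => hstable i (Y i)
  linarith

/-- first welfare theorem for stable outcomes: if `(X, p)` is
stable, then for every allocation `(Yᵢ)` of the sold items `M' = ⋃ᵢ Xᵢ`,
`∑ᵢ vᵢ(Xᵢ) ≥ ∑ᵢ vᵢ(Yᵢ)`. -/
theorem stmt9 {ι α : Type*} [Fintype ι] [Fintype α] [DecidableEq ι] [DecidableEq α]
    (v : ι → Finset α → ℝ) (hnonneg : ∀ i S, 0 ≤ v i S)
    (p : α → ℝ) (hp : ∀ j, 0 ≤ p j)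
    (X : ι → Finset α)
    (hdisj : ∀ i k, i ≠ k → Disjoint (X i) (X k))
    (hstable : ∀ i, ∀ S : Finset α,
      v i S - ∑ j ∈ S, p j ≤ v i (X i) - ∑ j ∈ X i, p j)
    (M' : Finset α) (hM' : M' = Finset.univ.biUnion X)
    (Y : ι → Finset α)
    (hYdisj : ∀ i k, i ≠ k → Disjoint (Y i) (Y k))
    (hYsub : ∀ i, Y i ⊆ M') :
    ∑ i, v i (Y i) ≤ ∑ i, v i (X i) :=
  stmt9_general v p hp X hdisj hstable M' hM' Y hYdisj hYsub
end

section
/- If (X, p) is a stable outcome, then the integral allocation X achieves the optimum of the configuration LP restricted to the items M' = ⋃_i X_i; in particular no fractional allocation of the items in M' achieves strictly higher welfare than ∑_i v_i(X_i). -/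
/-!
Weak LP duality. The buyers' utilities `uᵢ = vᵢ(Xᵢ) - p(Xᵢ)` together with the prices form a
feasible solution of the dual of the configuration LP: stability says exactly
`vᵢ(S) ≤ uᵢ + p(S)`, and `uᵢ ≥ 0` because the empty bundle is available. Hence every fractional
allocation of `M'` has welfare at most `∑ᵢ uᵢ + p(M') ≤ ∑ᵢ uᵢ + ∑ᵢ p(Xᵢ) = ∑ᵢ vᵢ(Xᵢ)`.
-/

open Finset

namespace Finset

theorem sum_biUnion_le_sum_sum {ι α β : Type*} [DecidableEq α]
    [AddCommMonoid β] [PartialOrder β] [IsOrderedAddMonoid β]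
    {f : α → β} (hf : ∀ a, 0 ≤ f a) (s : Finset ι) (t : ι → Finset α) :
    ∑ a ∈ s.biUnion t, f a ≤ ∑ i ∈ s, ∑ a ∈ t i, f a := by
  rw [← sup_eq_biUnion]
  refine s.apply_sup_le_sum (f := fun u => ∑ a ∈ u, f a) sum_empty fun {u w} => ?_
  calc ∑ a ∈ u ∪ w, f a ≤ ∑ a ∈ u ∪ w, f a + ∑ a ∈ u ∩ w, f a :=
        le_add_of_nonneg_right (sum_nonneg fun a _ => hf a)
    _ = ∑ a ∈ u, f a + ∑ a ∈ w, f a := sum_union_inter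

theorem sum_powerset_sum_mul {α R : Type*} [DecidableEq α] [NonUnitalNonAssocSemiring R]
    (M : Finset α) (p : α → R) (y : Finset α → R) :
    ∑ S ∈ M.powerset, (∑ j ∈ S, p j) * y S =
      ∑ j ∈ M, p j * ∑ S ∈ M.powerset.filter (fun S => j ∈ S), y S := by
  have hS : ∀ S ∈ M.powerset, (∑ j ∈ S, p j) * y S = ∑ j ∈ M, if j ∈ S then p j * y S else 0 := by
    intro S hS
    rw [sum_ite_mem, inter_eq_right.mpr (mem_powerset.mp hS), sum_mul]
  rw [sum_congr rfl hS, sum_comm]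
  exact sum_congr rfl fun j _ => by rw [mul_sum, sum_filter]

end Finset

theorem configLP_weak_duality {ι α : Type*} [Fintype ι] [DecidableEq α]
    (v : ι → Finset α → ℝ) (M : Finset α) (x : ι → Finset α → ℝ)
    (hx : ∀ i S, 0 ≤ x i S)
    (hbuyer : ∀ i, ∑ S ∈ M.powerset, x i S ≤ 1)
    (hitem : ∀ j ∈ M, ∑ i, ∑ S ∈ M.powerset.filter (fun S => j ∈ S), x i S ≤ 1)
    (u : ι → ℝ) (p : α → ℝ) (hu : ∀ i, 0 ≤ u i) (hp : ∀ j, 0 ≤ p j)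
    (hdual : ∀ i, ∀ S ⊆ M, v i S ≤ u i + ∑ j ∈ S, p j) :
    ∑ i, ∑ S ∈ M.powerset, v i S * x i S ≤ ∑ i, u i + ∑ j ∈ M, p j := by
  have hbuyers : ∑ i, ∑ S ∈ M.powerset, u i * x i S ≤ ∑ i, u i := by
    refine sum_le_sum fun i _ => ?_
    rw [← mul_sum]
    exact mul_le_of_le_one_right (hu i) (hbuyer i)
  have hitems : ∑ i, ∑ S ∈ M.powerset, (∑ j ∈ S, p j) * x i S ≤ ∑ j ∈ M, p j := calc
    _ = ∑ j ∈ M, p j * ∑ i, ∑ S ∈ M.powerset.filter (fun S => j ∈ S), x i S := by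
        simp only [sum_powerset_sum_mul, mul_sum]
        exact sum_comm
    _ ≤ ∑ j ∈ M, p j := sum_le_sum fun j hj => mul_le_of_le_one_right (hp j) (hitem j hj)
  calc ∑ i, ∑ S ∈ M.powerset, v i S * x i S
      ≤ ∑ i, ∑ S ∈ M.powerset, (u i + ∑ j ∈ S, p j) * x i S :=
        sum_le_sum fun i _ => sum_le_sum fun S hS =>
          mul_le_mul_of_nonneg_right (hdual i S (mem_powerset.mp hS)) (hx i S)
    _ = ∑ i, ∑ S ∈ M.powerset, u i * x i S +
          ∑ i, ∑ S ∈ M.powerset, (∑ j ∈ S, p j) * x i S := by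
        simp only [add_mul, sum_add_distrib]
    _ ≤ ∑ i, u i + ∑ j ∈ M, p j := add_le_add hbuyers hitems

theorem stmt10_general {ι α : Type*} [Fintype ι] [DecidableEq α]
    (v : ι → Finset α → ℝ) (hnonneg : ∀ i S, 0 ≤ v i S)
    (p : α → ℝ) (hp : ∀ j, 0 ≤ p j)
    (X : ι → Finset α)
    (hstable : ∀ i, ∀ S : Finset α,
      v i S - ∑ j ∈ S, p j ≤ v i (X i) - ∑ j ∈ X i, p j)
    (M' : Finset α) (hM' : M' = Finset.univ.biUnion X)
    (x : ι → Finset α → ℝ)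
    (hxnonneg : ∀ i S, 0 ≤ x i S)
    (hbuyer : ∀ i, ∑ S ∈ M'.powerset, x i S ≤ 1)
    (hitem : ∀ j ∈ M', ∑ i, ∑ S ∈ M'.powerset.filter (fun S => j ∈ S), x i S ≤ 1) :
    ∑ i, ∑ S ∈ M'.powerset, v i S * x i S ≤ ∑ i, v i (X i) := by
  set u : ι → ℝ := fun i => v i (X i) - ∑ j ∈ X i, p j
  have hu : ∀ i, 0 ≤ u i := fun i => (hnonneg i ∅).trans (by simpa using hstable i ∅)
  calc ∑ i, ∑ S ∈ M'.powerset, v i S * x i S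
      ≤ ∑ i, u i + ∑ j ∈ M', p j :=
        configLP_weak_duality v M' x hxnonneg hbuyer hitem u p hu hp
          fun i S _ => by linarith [hstable i S]
    _ ≤ ∑ i, u i + ∑ i, ∑ j ∈ X i, p j := by
        grw [hM', sum_biUnion_le_sum_sum hp]
    _ = ∑ i, v i (X i) := by
        rw [← sum_add_distrib]
        exact sum_congr rfl fun i _ => sub_add_cancel _ _

/-- if `(X, p)` is stable, then `X` achieves the optimum of the
configuration LP restricted to the sold items `M' = ⋃ᵢ Xᵢ`: no feasible
fractional allocation of the items of `M'` attains welfare exceeding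
`∑ᵢ vᵢ(Xᵢ)`. -/
theorem stmt10 {ι α : Type*} [Fintype ι] [Fintype α] [DecidableEq ι] [DecidableEq α]
    (v : ι → Finset α → ℝ) (hnonneg : ∀ i S, 0 ≤ v i S)
    (p : α → ℝ) (hp : ∀ j, 0 ≤ p j)
    (X : ι → Finset α)
    (hdisj : ∀ i k, i ≠ k → Disjoint (X i) (X k))
    (hstable : ∀ i, ∀ S : Finset α,
      v i S - ∑ j ∈ S, p j ≤ v i (X i) - ∑ j ∈ X i, p j)
    (M' : Finset α) (hM' : M' = Finset.univ.biUnion X)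
    (x : ι → Finset α → ℝ)
    (hxnonneg : ∀ i S, 0 ≤ x i S)
    (hbuyer : ∀ i, ∑ S ∈ M'.powerset, x i S ≤ 1)
    (hitem : ∀ j ∈ M', ∑ i, ∑ S ∈ M'.powerset.filter (fun S => j ∈ S), x i S ≤ 1) :
    ∑ i, ∑ S ∈ M'.powerset, v i S * x i S ≤ ∑ i, v i (X i) :=
  stmt10_general v hnonneg p hp X hstable M' hM' x hxnonneg hbuyer hitem
end

section
/- For two budget-additive buyers with budgets B₁ ≥ B₂, if ∑_j v_{1j} ≥ B₁ and one sets prices p_j = v_{1j}, allocates any demanded bundle D₂ to buyer 2 and a set S₁ \ D₂ (with B₁/2 ≤ ∑_{j∈S₁} v_{1j} ≤ B₁) to buyer 1, then the resulting outcome is stable and its welfare is at least B₁/2 ≥ (B₁+B₂)/4 ≥ OPT/4. -/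
/-! At prices equal to buyer 1's item values, buyer 1 never gets positive utility, so any bundle
she can afford within her budget is demanded, with utility `0`. Buyer 2 demands `D₂` only if
she values it at least at its price `∑_{j ∈ D₂} v₁ⱼ`, so whatever of `S₁` buyer 1 loses to
buyer 2 is made up for in buyer 2's value, and the welfare is at least `∑_{j ∈ S₁} v₁ⱼ ≥ B₁/2`.
Since every allocation has welfare at most `B₁ + B₂ ≤ 2 B₁`, this is a `4`-approximation. -/

open Finset

section

variable {α : Type*}

def budgetAdditive (w : α → ℝ) (B : ℝ) (S : Finset α) : ℝ :=
  min (∑ j ∈ S, w j) B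

def IsDemanded (v : Finset α → ℝ) (p : α → ℝ) (D : Finset α) : Prop :=
  ∀ S, v S - ∑ j ∈ S, p j ≤ v D - ∑ j ∈ D, p j

section BudgetAdditive

variable (w : α → ℝ) (B : ℝ)

lemma budgetAdditive_le_sum (S : Finset α) : budgetAdditive w B S ≤ ∑ j ∈ S, w j :=
  min_le_left _ _

lemma budgetAdditive_le_budget (S : Finset α) : budgetAdditive w B S ≤ B :=
  min_le_right _ _

variable {w B}

lemma budgetAdditive_of_sum_le {S : Finset α} (h : ∑ j ∈ S, w j ≤ B) :
    budgetAdditive w B S = ∑ j ∈ S, w j :=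
  min_eq_left h

lemma budgetAdditive_empty (hB : 0 ≤ B) : budgetAdditive w B ∅ = 0 := by
  simp [budgetAdditive, hB]

lemma isDemanded_budgetAdditive_of_sum_le {T : Finset α} (hT : ∑ j ∈ T, w j ≤ B) :
    IsDemanded (budgetAdditive w B) w T := by
  intro S
  rw [budgetAdditive_of_sum_le hT, sub_self, sub_nonpos]
  exact budgetAdditive_le_sum w B S

end BudgetAdditive

lemma IsDemanded.sum_le {v : Finset α → ℝ} {p : α → ℝ} {D : Finset α}
    (hD : IsDemanded v p D) (h0 : v ∅ = 0) : ∑ j ∈ D, p j ≤ v D := by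
  simpa [h0] using hD ∅

lemma sum_le_sum_sdiff_add_sum [DecidableEq α] {w : α → ℝ} (hw : ∀ j, 0 ≤ w j)
    (S D : Finset α) : ∑ j ∈ S, w j ≤ ∑ j ∈ S \ D, w j + ∑ j ∈ D, w j := by
  rw [← sum_union sdiff_disjoint, sdiff_union_self_eq_union]
  exact sum_le_sum_of_subset_of_nonneg subset_union_left fun j _ _ => hw j

end

theorem stmt15_general {α : Type*} [Fintype α] [DecidableEq α]
    (B₁ B₂ : ℝ) (hB : B₁ ≥ B₂) (hB₂ : 0 < B₂)
    (w₁ w₂ : α → ℝ) (hw₁0 : ∀ j, 0 ≤ w₁ j)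
    (v₁ v₂ : Finset α → ℝ)
    (hv₁ : ∀ S, v₁ S = min (∑ j ∈ S, w₁ j) B₁)
    (hv₂ : ∀ S, v₂ S = min (∑ j ∈ S, w₂ j) B₂)
    (p : α → ℝ) (hp : ∀ j, p j = w₁ j)
    (S₁ : Finset α) (hS₁l : B₁ / 2 ≤ ∑ j ∈ S₁, w₁ j) (hS₁u : ∑ j ∈ S₁, w₁ j ≤ B₁)
    (D₂ : Finset α)
    (hD₂ : ∀ S : Finset α, v₂ S - ∑ j ∈ S, p j ≤ v₂ D₂ - ∑ j ∈ D₂, p j) :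
    -- stability of the outcome (S₁ \ D₂, D₂):
    Disjoint (S₁ \ D₂) D₂ ∧
    (∀ S : Finset α, v₁ S - ∑ j ∈ S, p j ≤ v₁ (S₁ \ D₂) - ∑ j ∈ S₁ \ D₂, p j) ∧
    (∀ S : Finset α, v₂ S - ∑ j ∈ S, p j ≤ v₂ D₂ - ∑ j ∈ D₂, p j) ∧
    -- welfare guarantees:
    B₁ / 2 ≤ v₁ (S₁ \ D₂) + v₂ D₂ ∧
    (B₁ + B₂) / 4 ≤ B₁ / 2 ∧
    (∀ Y₁ Y₂ : Finset α, Disjoint Y₁ Y₂ → Y₁ ∪ Y₂ = Finset.univ →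
      (v₁ Y₁ + v₂ Y₂) / 4 ≤ v₁ (S₁ \ D₂) + v₂ D₂) := by
  obtain rfl : v₁ = budgetAdditive w₁ B₁ := funext hv₁
  obtain rfl : v₂ = budgetAdditive w₂ B₂ := funext hv₂
  obtain rfl : w₁ = p := (funext hp).symm
  have hkept : ∑ j ∈ S₁ \ D₂, w₁ j ≤ B₁ :=
    (sum_le_sum_of_subset_of_nonneg sdiff_subset fun j _ _ => hw₁0 j).trans hS₁u
  have hpaid : ∑ j ∈ D₂, w₁ j ≤ budgetAdditive w₂ B₂ D₂ :=
    IsDemanded.sum_le hD₂ (budgetAdditive_empty hB₂.le)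
  have hwelfare : B₁ / 2 ≤ budgetAdditive w₁ B₁ (S₁ \ D₂) + budgetAdditive w₂ B₂ D₂ :=
    calc B₁ / 2 ≤ ∑ j ∈ S₁, w₁ j := hS₁l
      _ ≤ ∑ j ∈ S₁ \ D₂, w₁ j + ∑ j ∈ D₂, w₁ j := sum_le_sum_sdiff_add_sum hw₁0 S₁ D₂
      _ ≤ _ := by rw [budgetAdditive_of_sum_le hkept]; gcongr
  refine ⟨sdiff_disjoint, isDemanded_budgetAdditive_of_sum_le hkept, hD₂, hwelfare,
    by linarith, fun Y₁ Y₂ _ _ => ?_⟩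
  linarith [budgetAdditive_le_budget w₁ B₁ Y₁, budgetAdditive_le_budget w₂ B₂ Y₂]

/-- case 1 of the two-budget-additive-buyer theorem:
with `B₁ ≥ B₂ > 0`, `∑ⱼ v₁ⱼ ≥ B₁`, prices `pⱼ = v₁ⱼ`, a set `S₁` with
`B₁/2 ≤ ∑_{j∈S₁} v₁ⱼ ≤ B₁`, and `D₂` a demanded bundle of buyer 2, the
outcome `(S₁ \ D₂, D₂)` at prices `p` is stable and its welfare is at least
`B₁/2 ≥ (B₁+B₂)/4 ≥ OPT/4`. -/
theorem stmt15 {α : Type*} [Fintype α] [DecidableEq α]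
    (B₁ B₂ : ℝ) (hB : B₁ ≥ B₂) (hB₂ : 0 < B₂)
    (w₁ w₂ : α → ℝ) (hw₁0 : ∀ j, 0 ≤ w₁ j) (hw₂0 : ∀ j, 0 ≤ w₂ j)
    (hw₁B : ∀ j, w₁ j ≤ B₁) (hw₂B : ∀ j, w₂ j ≤ B₂)
    (v₁ v₂ : Finset α → ℝ)
    (hv₁ : ∀ S, v₁ S = min (∑ j ∈ S, w₁ j) B₁)
    (hv₂ : ∀ S, v₂ S = min (∑ j ∈ S, w₂ j) B₂)
    (hsum : B₁ ≤ ∑ j ∈ Finset.univ, w₁ j)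
    (p : α → ℝ) (hp : ∀ j, p j = w₁ j)
    (S₁ : Finset α) (hS₁l : B₁ / 2 ≤ ∑ j ∈ S₁, w₁ j) (hS₁u : ∑ j ∈ S₁, w₁ j ≤ B₁)
    (D₂ : Finset α)
    (hD₂ : ∀ S : Finset α, v₂ S - ∑ j ∈ S, p j ≤ v₂ D₂ - ∑ j ∈ D₂, p j) :
    -- stability of the outcome (S₁ \ D₂, D₂):
    Disjoint (S₁ \ D₂) D₂ ∧
    (∀ S : Finset α, v₁ S - ∑ j ∈ S, p j ≤ v₁ (S₁ \ D₂) - ∑ j ∈ S₁ \ D₂, p j) ∧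
    (∀ S : Finset α, v₂ S - ∑ j ∈ S, p j ≤ v₂ D₂ - ∑ j ∈ D₂, p j) ∧
    -- welfare guarantees:
    B₁ / 2 ≤ v₁ (S₁ \ D₂) + v₂ D₂ ∧
    (B₁ + B₂) / 4 ≤ B₁ / 2 ∧
    (∀ Y₁ Y₂ : Finset α, Disjoint Y₁ Y₂ → Y₁ ∪ Y₂ = Finset.univ →
      (v₁ Y₁ + v₂ Y₂) / 4 ≤ v₁ (S₁ \ D₂) + v₂ D₂) :=
  stmt15_general B₁ B₂ hB hB₂ w₁ w₂ hw₁0 v₁ v₂ hv₁ hv₂ p hp S₁ hS₁l hS₁u D₂ hD₂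
end

section
/- The function f₁(S) = max_{j=1,...,k} XOS(S ∩ B_j), where XOS(T) = |T| if |T| ≠ 1, XOS(T) = 2 if |T| = 1, and XOS(∅) = 0, and B₁,...,B_k partition the item set, is an XOS (fractionally subadditive) valuation: it is the pointwise maximum of a finite family of additive functions with nonnegative weights. -/
/-! On one bucket `B`, `S ↦ XOS (S ∩ B)` is the maximum of the indicator clause of `B`, worth
`|S ∩ B|`, and, for each `y ∈ B`, the clause with weight `2` on `y` alone, worth `2` once
`y ∈ S`: these never exceed `XOS (S ∩ B)`, and the first or (when `S ∩ B = {y}`) the second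
attains it. A maximum of finitely many such functions is again a maximum of additive clauses,
namely of all their clauses together. -/

open Finset

def IsXOSFamily {ι α : Type*} (a : ι → α → ℝ) (f : Finset α → ℝ) : Prop :=
  (∀ i x, 0 ≤ a i x) ∧
    ∀ S : Finset α, (∀ i, ∑ x ∈ S, a i x ≤ f S) ∧ ∃ i, f S = ∑ x ∈ S, a i x

namespace IsXOSFamily

variable {ι κ α : Type*}

theorem comp_equiv {a : ι → α → ℝ} {f : Finset α → ℝ} (h : IsXOSFamily a f) (e : κ ≃ ι) :
    IsXOSFamily (a ∘ e) f := by
  refine ⟨fun i => h.1 (e i), fun S => ⟨fun i => (h.2 S).1 (e i), ?_⟩⟩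
  obtain ⟨i, hi⟩ := (h.2 S).2
  exact ⟨e.symm i, by simpa using hi⟩

theorem exists_fin [Fintype ι] {a : ι → α → ℝ} {f : Finset α → ℝ} (h : IsXOSFamily a f) :
    ∃ (r : ℕ) (b : Fin r → α → ℝ), IsXOSFamily b f :=
  ⟨_, _, h.comp_equiv (Fintype.equivFin ι).symm⟩

theorem sup' [Fintype κ] (hκ : (univ : Finset κ).Nonempty) {a : κ → ι → α → ℝ}
    {f : κ → Finset α → ℝ} (h : ∀ j, IsXOSFamily (a j) (f j)) :
    IsXOSFamily (fun p : κ × ι => a p.1 p.2) (fun S => univ.sup' hκ fun j => f j S) := by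
  refine ⟨fun p => (h p.1).1 p.2, fun S => ⟨fun p => ?_, ?_⟩⟩
  · exact ((h p.1).2 S).1 p.2 |>.trans (le_sup' (fun j => f j S) (mem_univ p.1))
  · obtain ⟨j, -, hj⟩ := exists_mem_eq_sup' hκ fun j => f j S
    obtain ⟨i, hi⟩ := ((h j).2 S).2
    exact ⟨(j, i), hj.trans hi⟩

end IsXOSFamily

section XOSValue

variable {α : Type*}

def xosValue (T : Finset α) : ℝ := if T.card = 1 then 2 else T.card

theorem xosValue_nonneg (T : Finset α) : 0 ≤ xosValue T := by
  unfold xosValue; split_ifs <;> positivity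

theorem card_le_xosValue (T : Finset α) : (T.card : ℝ) ≤ xosValue T := by
  unfold xosValue; split_ifs with h
  · rw [h]; norm_num
  · exact le_rfl

theorem two_le_xosValue {T : Finset α} (hT : T.Nonempty) : 2 ≤ xosValue T := by
  unfold xosValue; split_ifs with h
  · exact le_rfl
  · have : 2 ≤ T.card := by have := hT.card_pos; omega
    exact_mod_cast this

variable [DecidableEq α]

def xosClause (B : Finset α) : Option α → α → ℝ
  | none, x => if x ∈ B then 1 else 0
  | some y, x => if y ∈ B ∧ x = y then 2 else 0

theorem sum_xosClause_none (B S : Finset α) :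
    ∑ x ∈ S, xosClause B none x = (S ∩ B).card := by
  simp [xosClause]

theorem sum_xosClause_some (B S : Finset α) (y : α) :
    ∑ x ∈ S, xosClause B (some y) x = if y ∈ S ∩ B then 2 else 0 := by
  by_cases hy : y ∈ B <;> simp [xosClause, hy]

theorem isXOSFamily_xosClause (B : Finset α) :
    IsXOSFamily (xosClause B) fun S => xosValue (S ∩ B) := by
  refine ⟨?_, fun S => ⟨?_, ?_⟩⟩
  · rintro (_ | y) x <;> simp only [xosClause] <;> split_ifs <;> norm_num
  · rintro (_ | y)
    · rw [sum_xosClause_none]; exact card_le_xosValue _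
    · rw [sum_xosClause_some]; split_ifs with hy
      · exact two_le_xosValue ⟨y, hy⟩
      · exact xosValue_nonneg _
  · by_cases hc : (S ∩ B).card = 1
    · obtain ⟨y, hy⟩ := card_eq_one.mp hc
      refine ⟨some y, ?_⟩
      simp [sum_xosClause_some, hy, xosValue]
    · exact ⟨none, by rw [sum_xosClause_none]; simp [xosValue, hc]⟩

end XOSValue

theorem stmt19_general {α : Type*} [Fintype α] [DecidableEq α]
    (k : ℕ) (hk : 0 < k) (B : Fin k → Finset α)
    (XOS : Finset α → ℝ)
    (hXOS : ∀ T : Finset α, XOS T = if T.card = 1 then 2 else (T.card : ℝ))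
    (f₁ : Finset α → ℝ)
    (hf₁ : ∀ S : Finset α,
      f₁ S = (Finset.univ.sup' ⟨⟨0, hk⟩, Finset.mem_univ _⟩ fun j => XOS (S ∩ B j))) :
    ∃ (r : ℕ) (a : Fin r → α → ℝ),
      (∀ i j, 0 ≤ a i j) ∧
      ∀ S : Finset α,
        (∀ i, ∑ j ∈ S, a i j ≤ f₁ S) ∧ (∃ i, f₁ S = ∑ j ∈ S, a i j) := by
  have hf₁ : f₁ = fun S => univ.sup' ⟨⟨0, hk⟩, mem_univ _⟩ fun j => xosValue (S ∩ B j) := by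
    funext S; rw [hf₁, funext hXOS]; rfl
  rw [hf₁]
  exact (IsXOSFamily.sup' _ fun j => isXOSFamily_xosClause (B j)).exists_fin

/-- `f₁(S) = maxⱼ XOS(S ∩ Bⱼ)`, where the buckets `B₁,…,B_k`
partition the item set and `XOS(T) = 2` if `|T| = 1` and `|T|` otherwise,
is an XOS valuation: the pointwise maximum of finitely many additive
functions with nonnegative weights. -/
theorem stmt19 {α : Type*} [Fintype α] [DecidableEq α]
    (k : ℕ) (hk : 0 < k) (B : Fin k → Finset α)
    (hdisj : ∀ i j : Fin k, i ≠ j → Disjoint (B i) (B j))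
    (hcover : Finset.univ.biUnion B = Finset.univ)
    (XOS : Finset α → ℝ)
    (hXOS : ∀ T : Finset α, XOS T = if T.card = 1 then 2 else (T.card : ℝ))
    (f₁ : Finset α → ℝ)
    (hf₁ : ∀ S : Finset α,
      f₁ S = (Finset.univ.sup' ⟨⟨0, hk⟩, Finset.mem_univ _⟩ fun j => XOS (S ∩ B j))) :
    ∃ (r : ℕ) (a : Fin r → α → ℝ),
      (∀ i j, 0 ≤ a i j) ∧
      ∀ S : Finset α,
        (∀ i, ∑ j ∈ S, a i j ≤ f₁ S) ∧ (∃ i, f₁ S = ∑ j ∈ S, a i j) :=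
  stmt19_general k hk B XOS hXOS f₁ hf₁
end
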